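/- In K = Q(√2,√3), the element ζ = 3 − (1/2)√2 − √3 + (1/2)√6 is a totally positive algebraic integer of K, has norm 25, and is indecomposable in O_K. -/

import Mathlib

/-- The four real embeddings of the biquadratic field `Q(√p,√q)` applied to the element
`a + b√p + c√q + d√r` (given by the quadruple `v = (a,b,c,d)` of rationals); the signs
`s, t ∈ {1,-1}` determine the embedding: `√p ↦ s√p`, `√q ↦ t√q`, `√r ↦ st√r`. -/
noncomputable def emb (p q r : ℕ) (s t : ℤ) (v : ℚ × ℚ × ℚ × ℚ) : ℝ :=
  (v.1 : ℝ) + (s : ℝ) * (v.2.1 : ℝ) * Real.sqrt p + (t : ℝ) * (v.2.2.1 : ℝ) * Real.sqrt q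
    + (s : ℝ) * (t : ℝ) * (v.2.2.2 : ℝ) * Real.sqrt r

/-- The possible signs. -/
def Sgn : Set ℤ := {1, -1}

/-- Total positivity: all four embeddings are positive. -/
def TotPos (p q r : ℕ) (v : ℚ × ℚ × ℚ × ℚ) : Prop :=
  ∀ s ∈ Sgn, ∀ t ∈ Sgn, 0 < emb p q r s t v

/-- Membership in the ring of integers of `Q(√p,√q)`. -/
def IsIntK (p q r : ℕ) (v : ℚ × ℚ × ℚ × ℚ) : Prop :=
  IsIntegral ℤ (emb p q r 1 1 v)

/-- Indecomposability: totally positive and not a sum of two totally positive integers. -/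
def Indec (p q r : ℕ) (v : ℚ × ℚ × ℚ × ℚ) : Prop :=
  TotPos p q r v ∧ IsIntK p q r v ∧
    ¬ ∃ β γ : ℚ × ℚ × ℚ × ℚ, IsIntK p q r β ∧ IsIntK p q r γ ∧
      TotPos p q r β ∧ TotPos p q r γ ∧ β + γ = v


/-!
An integer `x = a + b√2 + c√3 + d√6` of `K = ℚ(√2, √3)` has all its conjugates integral, so the
sums and products of `x` with its conjugates are integers of the quadratic subfields
`ℚ(√2), ℚ(√3), ℚ(√6)`, whose rings of integers are `ℤ[√n]`. This forces `a, c ∈ ℤ` and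
`2b, 2d ∈ ℤ` with `2b ≡ 2d (mod 2)`.

If `ζ = β + γ` with `β, γ` totally positive integers, their rational parts (a quarter of their
traces) are positive integers adding up to `3`, so one of them, say `β`, has rational part `1`.
Two embeddings of `β` that agree on `ℚ(√n)` add up to `2(a ± b√n)`, so total positivity gives
`n b² < a² = 1` for `n = 2, 3, 6`, and with the integrality conditions `β = 1`. But `ζ - 1` is not
totally positive: the embedding `√2 ↦ -√2, √3 ↦ √3` sends `ζ` to `0.75…`.
-/

open QuadraticAlgebra

theorem Rat.exists_intCast_eq_of_squarefree {n M : ℤ} (hn : Squarefree n) {r : ℚ}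
    (h : (M : ℚ) = n * r ^ 2) : ∃ m : ℤ, (m : ℚ) = r := by
  refine ⟨r.num, Rat.coe_int_num_of_den_eq_one ?_⟩
  have hden : (r.den : ℤ) ^ 2 ∣ n * r.num ^ 2 := ⟨M, by
    rw [← Rat.num_div_den r] at h
    field_simp at h
    exact_mod_cast (show (n * r.num ^ 2 : ℚ) = (r.den : ℚ) ^ 2 * M by linarith)⟩
  have hunit := hn _ (sq (r.den : ℤ) ▸
    (Rat.isCoprime_num_den r).symm.pow.dvd_of_dvd_mul_right hden)
  simpa [Int.isUnit_iff] using hunit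

theorem Int.two_dvd_of_sq_sub_mul_sq_eq_four_mul {n P Q N : ℤ} (hn : n % 4 = 2 ∨ n % 4 = 3)
    (h : P ^ 2 - n * Q ^ 2 = 4 * N) : 2 ∣ P ∧ 2 ∣ Q := by
  obtain ⟨k, rfl | rfl⟩ := Int.even_or_odd' P <;> obtain ⟨l, rfl | rfl⟩ := Int.even_or_odd' Q <;>
    ring_nf at h <;> omega

theorem QuadraticAlgebra.exists_intCast_eq_of_isIntegral {n : ℤ} (hn : Squarefree n)
    (hn4 : n % 4 = 2 ∨ n % 4 = 3) {z : QuadraticAlgebra ℚ n 0} (hz : IsIntegral ℤ z) :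
    ∃ p q : ℤ, z = ⟨p, q⟩ := by
  have hstar : IsIntegral ℤ (star z) := hz.map (starRingEnd _).toIntAlgHom
  have hinj : Function.Injective (algebraMap ℚ (QuadraticAlgebra ℚ n 0)) := fun r s h => by
    simpa using congrArg re h
  have exists_int (r : ℚ) (h : IsIntegral ℤ (algebraMap ℚ (QuadraticAlgebra ℚ n 0) r)) :
      ∃ m : ℤ, (m : ℚ) = r :=
    IsIntegrallyClosed.isIntegral_iff.mp ((isIntegral_algebraMap_iff hinj).mp h)
  obtain ⟨P, hP⟩ := exists_int _ (algebraMap_trace_eq_add_star z ▸ hz.add hstar)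
  obtain ⟨N, hN⟩ := exists_int _ (algebraMap_norm_eq_mul_star z ▸ hz.mul hstar)
  simp only [trace_def, norm_def] at hP hN
  obtain ⟨Q, hQ⟩ := Rat.exists_intCast_eq_of_squarefree hn (M := P ^ 2 - 4 * N) (r := 2 * z.im)
    (by push_cast [hP, hN]; ring)
  have hPQ : P ^ 2 - n * Q ^ 2 = 4 * N := by
    exact_mod_cast (show (P ^ 2 - n * Q ^ 2 : ℚ) = 4 * N by rw [hP, hQ, hN]; ring)
  obtain ⟨⟨p, rfl⟩, ⟨q, rfl⟩⟩ := Int.two_dvd_of_sq_sub_mul_sq_eq_four_mul hn4 hPQ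
  refine ⟨p, q, ?_⟩
  ext <;> push_cast at hP hQ ⊢ <;> linarith

theorem QuadraticAlgebra.exists_intCast_eq_of_isIntegral_map {n : ℤ} (hn : Squarefree n)
    (hn4 : n % 4 = 2 ∨ n % 4 = 3) {E : Type*} [Ring E] (f : QuadraticAlgebra ℚ n 0 →+* E)
    (hf : Function.Injective f) {y : E} (hy : IsIntegral ℤ y) {p q : ℚ} (hfy : f ⟨p, q⟩ = y) :
    ∃ P Q : ℤ, (P : ℚ) = p ∧ (Q : ℚ) = q := by
  subst hfy
  obtain ⟨P, Q, hPQ⟩ := exists_intCast_eq_of_isIntegral hn hn4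
    ((isIntegral_algHom_iff f.toIntAlgHom hf).mp hy)
  exact ⟨P, Q, (congrArg re hPQ).symm, (congrArg im hPQ).symm⟩

theorem Int.two_dvd_of_norm_forms_eq_four_mul {A B C D N₁ N₂ : ℤ}
    (h₁ : A ^ 2 + 2 * B ^ 2 - 3 * C ^ 2 - 6 * D ^ 2 = 4 * N₁)
    (h₂ : A ^ 2 - 2 * B ^ 2 + 3 * C ^ 2 - 6 * D ^ 2 = 4 * N₂) :
    2 ∣ A ∧ 2 ∣ C ∧ B ≡ D [ZMOD 2] := by
  unfold Int.ModEq
  obtain ⟨a, rfl | rfl⟩ := Int.even_or_odd' A <;> obtain ⟨b, rfl | rfl⟩ := Int.even_or_odd' B <;>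
    obtain ⟨c, rfl | rfl⟩ := Int.even_or_odd' C <;> obtain ⟨d, rfl | rfl⟩ := Int.even_or_odd' D <;>
    ring_nf at h₁ h₂ <;> omega

abbrev QSqrt2 := QuadraticAlgebra ℚ 2 0

instance : Fact (∀ r : ℚ, r ^ 2 ≠ 2 + 0 * r) := ⟨fun r h => by
  have : IsSquare (2 : ℚ) := ⟨r, by linear_combination -h⟩
  norm_num at this⟩

instance : Fact (∀ r : QSqrt2, r ^ 2 ≠ 3 + 0 * r) := ⟨fun ⟨p, q⟩ h => by
  have hre := congrArg re h
  have him := congrArg im h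
  simp only [sq, mk_mul_mk, zero_mul, add_zero, re_ofNat, im_ofNat] at hre him
  rcases mul_eq_zero.mp (show p * q = 0 by linarith) with rfl | rfl
  · have : IsSquare (6 : ℚ) := ⟨2 * q, by linear_combination -2 * hre⟩
    norm_num at this
  · have : IsSquare (3 : ℚ) := ⟨p, by linear_combination -hre⟩
    norm_num at this⟩

abbrev QSqrt2Sqrt3 := QuadraticAlgebra QSqrt2 3 0

namespace QSqrt2Sqrt3

section lift

variable {A : Type*} [Field A] [CharZero A]

def lift (u w : A) (hu : u * u = 2) (hw : w * w = 3) : QSqrt2Sqrt3 →+* A :=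
  letI : Algebra QSqrt2 A :=
    (QuadraticAlgebra.lift ⟨u, by simp [hu]⟩ : QSqrt2 →ₐ[ℚ] A).toRingHom.toAlgebra
  (QuadraticAlgebra.lift ⟨w, by simp [hw, Algebra.smul_def, RingHom.algebraMap_toAlgebra]⟩ :
    QSqrt2Sqrt3 →ₐ[QSqrt2] A).toRingHom

@[simp]
theorem lift_mk (u w : A) (hu : u * u = 2) (hw : w * w = 3) (a b c d : ℚ) :
    lift u w hu hw ⟨⟨a, b⟩, ⟨c, d⟩⟩ = a + b * u + (c + d * u) * w := by
  simp [lift, Algebra.smul_def, RingHom.algebraMap_toAlgebra]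

end lift

def conjSqrt2 : QSqrt2Sqrt3 →+* QSqrt2Sqrt3 :=
  lift ⟨⟨0, -1⟩, 0⟩ ⟨0, 1⟩ (by ext <;> simp) (by ext <;> simp)

def conjSqrt3 : QSqrt2Sqrt3 →+* QSqrt2Sqrt3 :=
  lift ⟨⟨0, 1⟩, 0⟩ ⟨0, -1⟩ (by ext <;> simp) (by ext <;> simp)

@[simp]
theorem conjSqrt2_mk (a b c d : ℚ) : conjSqrt2 ⟨⟨a, b⟩, ⟨c, d⟩⟩ = ⟨⟨a, -b⟩, ⟨c, -d⟩⟩ := by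
  ext <;> simp [conjSqrt2]

@[simp]
theorem conjSqrt3_mk (a b c d : ℚ) : conjSqrt3 ⟨⟨a, b⟩, ⟨c, d⟩⟩ = ⟨⟨a, b⟩, ⟨-c, -d⟩⟩ := by
  ext <;> simp [conjSqrt3]

def ofQSqrt2 : QuadraticAlgebra ℚ ((2 : ℤ) : ℚ) 0 →+* QSqrt2Sqrt3 :=
  (QuadraticAlgebra.lift ⟨⟨⟨0, 1⟩, 0⟩, by ext <;> simp⟩ : _ →ₐ[ℚ] QSqrt2Sqrt3).toRingHom

def ofQSqrt3 : QuadraticAlgebra ℚ ((3 : ℤ) : ℚ) 0 →+* QSqrt2Sqrt3 :=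
  (QuadraticAlgebra.lift ⟨⟨0, 1⟩, by ext <;> simp⟩ : _ →ₐ[ℚ] QSqrt2Sqrt3).toRingHom

def ofQSqrt6 : QuadraticAlgebra ℚ ((6 : ℤ) : ℚ) 0 →+* QSqrt2Sqrt3 :=
  (QuadraticAlgebra.lift ⟨⟨0, ⟨0, 1⟩⟩, by ext <;> simp; norm_num⟩ : _ →ₐ[ℚ] QSqrt2Sqrt3).toRingHom

theorem ofQSqrt2_mk (p q : ℚ) : ofQSqrt2 ⟨p, q⟩ = ⟨⟨p, q⟩, 0⟩ := by
  exact (lift_apply_apply _ _).trans (by ext <;> simp)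

theorem ofQSqrt3_mk (p q : ℚ) : ofQSqrt3 ⟨p, q⟩ = ⟨⟨p, 0⟩, ⟨q, 0⟩⟩ := by
  exact (lift_apply_apply _ _).trans (by ext <;> simp)

theorem ofQSqrt6_mk (p q : ℚ) : ofQSqrt6 ⟨p, q⟩ = ⟨⟨p, 0⟩, ⟨0, q⟩⟩ := by
  exact (lift_apply_apply _ _).trans (by ext <;> simp)

theorem ofQSqrt2_injective : Function.Injective ofQSqrt2 := fun ⟨p, q⟩ ⟨p', q'⟩ h => by
  simp only [ofQSqrt2_mk, QuadraticAlgebra.mk.injEq] at h ⊢; exact h.1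

theorem ofQSqrt3_injective : Function.Injective ofQSqrt3 := fun ⟨p, q⟩ ⟨p', q'⟩ h => by
  simp only [ofQSqrt3_mk, QuadraticAlgebra.mk.injEq] at h ⊢; exact ⟨h.1.1, h.2.1⟩

theorem ofQSqrt6_injective : Function.Injective ofQSqrt6 := fun ⟨p, q⟩ ⟨p', q'⟩ h => by
  simp only [ofQSqrt6_mk, QuadraticAlgebra.mk.injEq] at h ⊢; exact ⟨h.1.1, h.2.2⟩

theorem exists_int_of_isIntegral_sqrt2 {x : QSqrt2Sqrt3} (hx : IsIntegral ℤ x) {p q : ℚ}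
    (h : x = ⟨⟨p, q⟩, 0⟩) : ∃ P Q : ℤ, (P : ℚ) = p ∧ (Q : ℚ) = q :=
  exists_intCast_eq_of_isIntegral_map Int.prime_two.squarefree (by norm_num) ofQSqrt2
    ofQSqrt2_injective hx ((ofQSqrt2_mk p q).trans h.symm)

theorem exists_int_of_isIntegral_sqrt3 {x : QSqrt2Sqrt3} (hx : IsIntegral ℤ x) {p q : ℚ}
    (h : x = ⟨⟨p, 0⟩, ⟨q, 0⟩⟩) : ∃ P Q : ℤ, (P : ℚ) = p ∧ (Q : ℚ) = q :=
  exists_intCast_eq_of_isIntegral_map Int.prime_three.squarefree (by norm_num) ofQSqrt3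
    ofQSqrt3_injective hx ((ofQSqrt3_mk p q).trans h.symm)

theorem exists_int_of_isIntegral_sqrt6 {x : QSqrt2Sqrt3} (hx : IsIntegral ℤ x) {p q : ℚ}
    (h : x = ⟨⟨p, 0⟩, ⟨0, q⟩⟩) : ∃ P Q : ℤ, (P : ℚ) = p ∧ (Q : ℚ) = q :=
  have sqf6 : Squarefree (6 : ℤ) := Int.squarefree_natCast.mpr <| Nat.squarefree_mul_iff.mpr
    ⟨by norm_num, Nat.prime_two.prime.squarefree, Nat.prime_three.prime.squarefree⟩
  exists_intCast_eq_of_isIntegral_map sqf6 (by norm_num) ofQSqrt6 ofQSqrt6_injective hx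
    ((ofQSqrt6_mk p q).trans h.symm)

theorem exists_int_coords_of_isIntegral {x : QSqrt2Sqrt3} (hx : IsIntegral ℤ x) :
    ∃ A B C D : ℤ, x = ⟨⟨A, B / 2⟩, ⟨C, D / 2⟩⟩ ∧ B ≡ D [ZMOD 2] := by
  obtain ⟨⟨a, b⟩, ⟨c, d⟩⟩ := x
  have h2 : IsIntegral ℤ (conjSqrt2 ⟨⟨a, b⟩, ⟨c, d⟩⟩) := hx.map conjSqrt2.toIntAlgHom
  have h3 : IsIntegral ℤ (conjSqrt3 ⟨⟨a, b⟩, ⟨c, d⟩⟩) := hx.map conjSqrt3.toIntAlgHom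
  have h23 : IsIntegral ℤ (conjSqrt3 (conjSqrt2 ⟨⟨a, b⟩, ⟨c, d⟩⟩)) := h2.map conjSqrt3.toIntAlgHom
  obtain ⟨A, C, hA, hC⟩ := exists_int_of_isIntegral_sqrt3 (hx.add h2) (p := 2 * a) (q := 2 * c)
    (by ext <;> simp <;> ring)
  obtain ⟨-, B, -, hB⟩ := exists_int_of_isIntegral_sqrt2 (hx.add h3) (p := 2 * a) (q := 2 * b)
    (by ext <;> simp <;> ring)
  obtain ⟨-, D, -, hD⟩ := exists_int_of_isIntegral_sqrt6 (hx.add h23) (p := 2 * a) (q := 2 * d)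
    (by ext <;> simp <;> ring)
  obtain ⟨N₁, -, hN₁, -⟩ := exists_int_of_isIntegral_sqrt2 (hx.mul h3)
    (p := a ^ 2 + 2 * b ^ 2 - 3 * c ^ 2 - 6 * d ^ 2) (q := 2 * a * b - 6 * c * d)
    (by ext <;> simp <;> ring)
  obtain ⟨N₂, -, hN₂, -⟩ := exists_int_of_isIntegral_sqrt3 (hx.mul h2)
    (p := a ^ 2 - 2 * b ^ 2 + 3 * c ^ 2 - 6 * d ^ 2) (q := 2 * a * c - 4 * b * d)
    (by ext <;> simp <;> ring)
  obtain ⟨⟨A, rfl⟩, ⟨C, rfl⟩, hBD⟩ := Int.two_dvd_of_norm_forms_eq_four_mul (N₁ := N₁) (N₂ := N₂)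
    (by exact_mod_cast (show ((A:ℚ) ^ 2 + 2 * B ^ 2 - 3 * C ^ 2 - 6 * D ^ 2 = 4 * N₁) by
      rw [hA, hB, hC, hD, hN₁]; ring))
    (by exact_mod_cast (show ((A:ℚ) ^ 2 - 2 * B ^ 2 + 3 * C ^ 2 - 6 * D ^ 2 = 4 * N₂) by
      rw [hA, hB, hC, hD, hN₂]; ring))
  refine ⟨A, B, C, D, ?_, hBD⟩
  push_cast at hA hC
  ext <;> simp <;> linarith

/-- `(a, b, c, d) ↦ (a + b√2) + (c + d√2)√3 = a + b√2 + c√3 + d√6`. -/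
def ofCoords (v : ℚ × ℚ × ℚ × ℚ) : QSqrt2Sqrt3 :=
  ⟨⟨v.1, v.2.1⟩, ⟨v.2.2.1, v.2.2.2⟩⟩

end QSqrt2Sqrt3

theorem emb_one_one_eq_lift (v : ℚ × ℚ × ℚ × ℚ) :
    emb 2 3 6 1 1 v = QSqrt2Sqrt3.lift √2 √3 (Real.mul_self_sqrt (by norm_num))
      (Real.mul_self_sqrt (by norm_num)) (QSqrt2Sqrt3.ofCoords v) := by
  rw [QSqrt2Sqrt3.ofCoords, QSqrt2Sqrt3.lift_mk, emb,
    show ((6 : ℕ) : ℝ) = 2 * 3 by norm_num, Real.sqrt_mul (by norm_num)]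
  push_cast
  ring

theorem IsIntK.exists_int_coords {v : ℚ × ℚ × ℚ × ℚ} (hv : IsIntK 2 3 6 v) :
    ∃ A B C D : ℤ, v = ((A : ℚ), (B : ℚ) / 2, (C : ℚ), (D : ℚ) / 2) ∧ B ≡ D [ZMOD 2] := by
  let f := QSqrt2Sqrt3.lift √2 √3 (Real.mul_self_sqrt (by norm_num))
      (Real.mul_self_sqrt (by norm_num))
  have hK : IsIntegral ℤ (QSqrt2Sqrt3.ofCoords v) :=
    (isIntegral_algHom_iff f.toIntAlgHom f.injective).mp (emb_one_one_eq_lift v ▸ hv)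
  obtain ⟨A, B, C, D, hv, hBD⟩ := QSqrt2Sqrt3.exists_int_coords_of_isIntegral hK
  obtain ⟨a, b, c, d⟩ := v
  simp only [QSqrt2Sqrt3.ofCoords, QuadraticAlgebra.mk.injEq] at hv
  obtain ⟨⟨rfl, rfl⟩, rfl, rfl⟩ := hv
  exact ⟨A, B, C, D, rfl, hBD⟩

theorem mul_sq_lt_sq_of_pos {x y n : ℝ} (hn : 0 ≤ n) (h₁ : 0 < x + y * √n)
    (h₂ : 0 < x - y * √n) : n * y ^ 2 < x ^ 2 := by
  nlinarith [mul_pos h₁ h₂, Real.sq_sqrt hn]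

theorem one_mem_Sgn : (1 : ℤ) ∈ Sgn := .inl rfl

theorem neg_one_mem_Sgn : (-1 : ℤ) ∈ Sgn := .inr rfl

section TotPos

variable {p q r : ℕ} {v : ℚ × ℚ × ℚ × ℚ}

theorem TotPos.fst_pos (h : TotPos p q r v) : 0 < v.1 := by
  have e₁ := h 1 one_mem_Sgn 1 one_mem_Sgn
  have e₂ := h 1 one_mem_Sgn (-1) neg_one_mem_Sgn
  have e₃ := h (-1) neg_one_mem_Sgn 1 one_mem_Sgn
  have e₄ := h (-1) neg_one_mem_Sgn (-1) neg_one_mem_Sgn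
  simp only [emb, Int.cast_one, Int.cast_neg] at e₁ e₂ e₃ e₄
  exact_mod_cast (show (0 : ℝ) < v.1 by linarith)

theorem TotPos.mul_sq_lt_sq (h : TotPos p q r v) :
    p * v.2.1 ^ 2 < v.1 ^ 2 ∧ q * v.2.2.1 ^ 2 < v.1 ^ 2 ∧ r * v.2.2.2 ^ 2 < v.1 ^ 2 := by
  have e₁ := h 1 one_mem_Sgn 1 one_mem_Sgn
  have e₂ := h 1 one_mem_Sgn (-1) neg_one_mem_Sgn
  have e₃ := h (-1) neg_one_mem_Sgn 1 one_mem_Sgn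
  have e₄ := h (-1) neg_one_mem_Sgn (-1) neg_one_mem_Sgn
  simp only [emb, Int.cast_one, Int.cast_neg] at e₁ e₂ e₃ e₄
  have hp := mul_sq_lt_sq_of_pos (x := v.1) (y := v.2.1) (Nat.cast_nonneg p)
    (by linarith) (by linarith)
  have hq := mul_sq_lt_sq_of_pos (x := v.1) (y := v.2.2.1) (Nat.cast_nonneg q)
    (by linarith) (by linarith)
  have hr := mul_sq_lt_sq_of_pos (x := v.1) (y := v.2.2.2) (Nat.cast_nonneg r)
    (by linarith) (by linarith)
  exact ⟨mod_cast hp, mod_cast hq, mod_cast hr⟩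

end TotPos

theorem eq_one_of_isIntK_of_totPos {v : ℚ × ℚ × ℚ × ℚ} (hv : IsIntK 2 3 6 v)
    (hpos : TotPos 2 3 6 v) (h1 : v.1 = 1) : v = (1, 0, 0, 0) := by
  obtain ⟨A, B, C, D, rfl, hBD⟩ := hv.exists_int_coords
  obtain ⟨hb, hc, hd⟩ := hpos.mul_sq_lt_sq
  have hA : (A : ℚ) = 1 := h1
  obtain rfl : A = 1 := by exact_mod_cast hA
  have hB : B ^ 2 < 2 := by exact_mod_cast (show (B : ℚ) ^ 2 < 2 by push_cast at hb; nlinarith)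
  have hC : C ^ 2 < 1 := by exact_mod_cast (show (C : ℚ) ^ 2 < 1 by push_cast at hc; nlinarith)
  have hD : D ^ 2 < 1 := by exact_mod_cast (show (D : ℚ) ^ 2 < 1 by push_cast at hd; nlinarith)
  obtain rfl : C = 0 := Int.abs_lt_one_iff.mp ((sq_lt_one_iff_abs_lt_one C).mp hC)
  obtain rfl : D = 0 := Int.abs_lt_one_iff.mp ((sq_lt_one_iff_abs_lt_one D).mp hD)
  obtain ⟨k, rfl⟩ : 2 ∣ B := by unfold Int.ModEq at hBD; omega
  obtain rfl : k = 0 := Int.abs_lt_one_iff.mp ((sq_lt_one_iff_abs_lt_one k).mp (by nlinarith))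
  simp

def ζ : ℚ × ℚ × ℚ × ℚ := (3, -1 / 2, -1, 1 / 2)

theorem emb_zeta_bounds :
    0 < emb 2 3 6 1 1 ζ ∧ 0 < emb 2 3 6 (-1) 1 ζ ∧ emb 2 3 6 (-1) 1 ζ < 1 ∧
      0 < emb 2 3 6 1 (-1) ζ ∧ 0 < emb 2 3 6 (-1) (-1) ζ := by
  have h2 : (1.414 : ℝ) < √2 := by rw [Real.lt_sqrt] <;> norm_num
  have h2' : √2 < 1.415 := by rw [Real.sqrt_lt'] <;> norm_num
  have h3 : (1.732 : ℝ) < √3 := by rw [Real.lt_sqrt] <;> norm_num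
  have h3' : √3 < 1.7321 := by rw [Real.sqrt_lt'] <;> norm_num
  have h6 : (2.449 : ℝ) < √6 := by rw [Real.lt_sqrt] <;> norm_num
  have h6' : √6 < 2.4495 := by rw [Real.sqrt_lt'] <;> norm_num
  simp only [emb, ζ]
  push_cast
  refine ⟨?_, ?_, ?_, ?_, ?_⟩ <;> linarith

theorem totPos_zeta : TotPos 2 3 6 ζ := by
  obtain ⟨h₁, h₂, -, h₃, h₄⟩ := emb_zeta_bounds
  rintro s (rfl | rfl) t (rfl | rfl) <;> assumption

theorem not_totPos_zeta_sub_one : ¬ TotPos 2 3 6 (ζ - (1, 0, 0, 0)) := fun h => by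
  have hpos := h (-1) neg_one_mem_Sgn 1 one_mem_Sgn
  have hlt := emb_zeta_bounds.2.2.1
  simp only [emb, ζ, Prod.fst_sub, Prod.snd_sub] at hpos hlt
  push_cast at hpos hlt
  linarith

theorem isIntegral_sqrt_natCast (n : ℕ) : IsIntegral ℤ √(n : ℝ) :=
  IsIntegral.of_pow two_pos (by
    rw [Real.sq_sqrt n.cast_nonneg]; exact_mod_cast (isIntegral_algebraMap (x := (n : ℤ))))

theorem isIntK_zeta : IsIntK 2 3 6 ζ := by
  have h2 := isIntegral_sqrt_natCast 2
  have h3 := isIntegral_sqrt_natCast 3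
  have hθ : IsIntegral ℤ ((√2 + √6) / 2) := IsIntegral.of_pow two_pos <| by
    have : ((√2 + √6) / 2) ^ 2 = 2 + √3 := by
      rw [show (6 : ℝ) = 2 * 3 by norm_num, Real.sqrt_mul zero_le_two]
      linear_combination ((1 + √3) ^ 2 / 4) * Real.sq_sqrt zero_le_two
        + (1 / 2 : ℝ) * Real.sq_sqrt zero_le_three
    rw [this]
    exact (isIntegral_algebraMap (x := (2 : ℤ))).add (by exact_mod_cast h3)
  have : emb 2 3 6 1 1 ζ = 3 - √2 - √3 + (√2 + √6) / 2 := by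
    simp only [emb, ζ]; push_cast; ring
  rw [IsIntK, this]
  push_cast at h2 h3
  exact ((((isIntegral_algebraMap (x := (3 : ℤ))).sub h2).sub h3).add hθ)

theorem emb_zeta_mul_emb_zeta_neg {s : ℤ} (hs : s ∈ Sgn) :
    emb 2 3 6 s 1 ζ * emb 2 3 6 s (-1) ζ = 5 := by
  have hs2 : (s : ℝ) ^ 2 = 1 := by rcases hs with rfl | rfl <;> norm_num
  simp only [emb, ζ]
  push_cast
  rw [show (6 : ℝ) = 2 * 3 by norm_num, Real.sqrt_mul zero_le_two]
  linear_combination (s * √2 - s ^ 2 * √2 ^ 2 / 4 - 1) * Real.sq_sqrt zero_le_three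
    - (s ^ 2 / 2 : ℝ) * Real.sq_sqrt zero_le_two - hs2

theorem norm_zeta : emb 2 3 6 1 1 ζ * emb 2 3 6 (-1) 1 ζ * emb 2 3 6 1 (-1) ζ
    * emb 2 3 6 (-1) (-1) ζ = 25 := by
  calc _ = (emb 2 3 6 1 1 ζ * emb 2 3 6 1 (-1) ζ)
        * (emb 2 3 6 (-1) 1 ζ * emb 2 3 6 (-1) (-1) ζ) := by ring
    _ = 5 * 5 := by
      rw [emb_zeta_mul_emb_zeta_neg one_mem_Sgn, emb_zeta_mul_emb_zeta_neg neg_one_mem_Sgn]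
    _ = 25 := by norm_num

theorem fst_eq_one_of_add_eq_zeta {β γ : ℚ × ℚ × ℚ × ℚ} (hβ : IsIntK 2 3 6 β)
    (hγ : IsIntK 2 3 6 γ) (hβpos : TotPos 2 3 6 β) (hγpos : TotPos 2 3 6 γ) (h : β + γ = ζ) :
    β.1 = 1 ∨ γ.1 = 1 := by
  obtain ⟨A, _, _, _, rfl, -⟩ := hβ.exists_int_coords
  obtain ⟨A', _, _, _, rfl, -⟩ := hγ.exists_int_coords
  have h₁ : (0 : ℚ) < A := hβpos.fst_pos
  have h₂ : (0 : ℚ) < A' := hγpos.fst_pos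
  have h₃ : (A : ℚ) + A' = 3 := congrArg Prod.fst h
  show (A : ℚ) = 1 ∨ (A' : ℚ) = 1
  norm_cast at h₁ h₂ h₃ ⊢
  omega

theorem not_totPos_of_add_eq_zeta {β γ : ℚ × ℚ × ℚ × ℚ} (hβ : IsIntK 2 3 6 β)
    (hβpos : TotPos 2 3 6 β) (h1 : β.1 = 1) (h : β + γ = ζ) : ¬ TotPos 2 3 6 γ := by
  rw [eq_sub_of_add_eq' h, eq_one_of_isIntK_of_totPos hβ hβpos h1]
  exact not_totPos_zeta_sub_one

theorem stmt_16 :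
    TotPos 2 3 6 (3, -1/2, -1, 1/2) ∧
    IsIntK 2 3 6 (3, -1/2, -1, 1/2) ∧
    emb 2 3 6 1 1 (3, -1/2, -1, 1/2) * emb 2 3 6 (-1) 1 (3, -1/2, -1, 1/2)
      * emb 2 3 6 1 (-1) (3, -1/2, -1, 1/2) * emb 2 3 6 (-1) (-1) (3, -1/2, -1, 1/2) = 25 ∧
    Indec 2 3 6 (3, -1/2, -1, 1/2) := by
  refine ⟨totPos_zeta, isIntK_zeta, norm_zeta, totPos_zeta, isIntK_zeta, ?_⟩
  rintro ⟨β, γ, hβ, hγ, hβpos, hγpos, h⟩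
  rcases fst_eq_one_of_add_eq_zeta hβ hγ hβpos hγpos h with h1 | h1
  · exact not_totPos_of_add_eq_zeta hβ hβpos h1 h hγpos
  · exact not_totPos_of_add_eq_zeta hγ hγpos h1 ((add_comm γ β).trans h) hβpos
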